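/- arXiv:1812.04649 — 3 statements merged into one kernel-verified Lean document; each statement's English description precedes it below -/
import Mathlib

section
/- Let n ≥ 1, let Dⁿ denote the closed unit ball in Euclidean space ℝⁿ and Sⁿ⁻¹ its boundary sphere. Let A be a topological space and let f : A → ℝⁿ be a topological embedding with range contained in Dⁿ such that the range of f has empty interior in ℝⁿ. Let T be a countable subset of the open unit ball. Then there exists a topological embedding g : A → ℝⁿ with range contained in Dⁿ \ T such that f⁻¹(Sⁿ⁻¹) = g⁻¹(Sⁿ⁻¹) and g(a) = f(a) for every a ∈ A with f(a) ∈ Sⁿ⁻¹. -/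
/-!
Enumerate `T ∪ {0}` as `t₀, t₁, …`. We build homeomorphisms `G_k` of `ℝⁿ` that fix the complement
of the open ball and satisfy `G_k⁻¹ (t_j) ∉ range f` for `j < k`. Given `G_k`, pick a point
`y ∉ G_k (range f)` very close to `t_k` (possible because `range f` has empty interior) and let
`G_{k+1} = φ ∘ G_k`, where `φ` is a small push along a tent function that moves `y` to `t_k` and is
supported in a tiny ball around `y` missing the earlier `t_j` and the complement of the open ball.
The pushes are so small that the `G_k` converge to a bi-Lipschitz map `H`, which still fixes the
complement of the open ball and has `T ⊆ H '' (range f)ᶜ`; then `g = H ∘ f`.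
-/

open Metric Set Filter Topology

theorem Set.mapsTo_of_injective_of_eqOn_compl {α : Type*} {f : α → α} {s : Set α}
    (hf : Function.Injective f) (h : EqOn f id sᶜ) : MapsTo f s s := by
  intro x hx
  by_contra hfx
  have hfix : f (f x) = f x := h hfx
  rw [hf hfix] at hfx
  exact hfx hx

theorem exists_seq_of_forall_exists_succ {α : Type*} {P : ℕ → α → Prop}
    {R : ℕ → α → α → Prop} {x₀ : α} (h₀ : P 0 x₀)
    (h : ∀ k x, P k x → ∃ y, P (k + 1) y ∧ R k x y) :
    ∃ s : ℕ → α, (∀ k, P k (s k)) ∧ ∀ k, R k (s k) (s (k + 1)) := by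
  have : Nonempty α := ⟨x₀⟩
  choose! g hgP hgR using h
  let s : ℕ → α := fun k => Nat.rec (motive := fun _ => α) x₀ g k
  have hs : ∀ k, P k (s k) := fun k => by
    induction k with
    | zero => exact h₀
    | succ k ih => exact hgP k _ ih
  exact ⟨s, hs, fun k => hgR k _ (hs k)⟩

section Bilipschitz

variable {X Y Z : Type*} [PseudoMetricSpace X] [PseudoMetricSpace Y] [PseudoMetricSpace Z]

def BilipschitzWith (a b : ℝ) (f : X → Y) : Prop :=
  ∀ x y, a * dist x y ≤ dist (f x) (f y) ∧ dist (f x) (f y) ≤ b * dist x y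

namespace BilipschitzWith

variable {a b a' b' : ℝ} {f : X → Y}

theorem mono (hf : BilipschitzWith a b f) (ha : a' ≤ a) (hb : b ≤ b') :
    BilipschitzWith a' b' f := fun x y =>
  ⟨(mul_le_mul_of_nonneg_right ha dist_nonneg).trans (hf x y).1,
    (hf x y).2.trans (mul_le_mul_of_nonneg_right hb dist_nonneg)⟩

theorem comp {g : Y → Z} (hg : BilipschitzWith a' b' g) (hf : BilipschitzWith a b f)
    (ha' : 0 ≤ a') (hb' : 0 ≤ b') : BilipschitzWith (a' * a) (b' * b) (g ∘ f) := fun x y =>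
  ⟨by rw [mul_assoc]; exact (mul_le_mul_of_nonneg_left (hf x y).1 ha').trans (hg _ _).1,
    by rw [mul_assoc]; exact (hg _ _).2.trans (mul_le_mul_of_nonneg_left (hf x y).2 hb')⟩

theorem of_tendsto {F : ℕ → X → Y} (hF : ∀ k, BilipschitzWith a b (F k))
    (hlim : ∀ x, Tendsto (F · x) atTop (𝓝 (f x))) : BilipschitzWith a b f := fun x y =>
  have hdist := (hlim x).dist (hlim y)
  ⟨ge_of_tendsto' hdist fun k => (hF k x y).1, le_of_tendsto' hdist fun k => (hF k x y).2⟩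

theorem isEmbedding {X Y : Type*} [MetricSpace X] [MetricSpace Y] {f : X → Y}
    (hf : BilipschitzWith a b f) (ha : 0 < a) : IsEmbedding f := by
  have hlip : LipschitzWith b.toNNReal f := LipschitzWith.of_dist_le_mul fun x y =>
    (hf x y).2.trans (mul_le_mul_of_nonneg_right (Real.le_coe_toNNReal b) dist_nonneg)
  have hanti : AntilipschitzWith a⁻¹.toNNReal f := by
    refine AntilipschitzWith.of_le_mul_dist fun x y => ?_
    rw [Real.coe_toNNReal _ (inv_nonneg.2 ha.le), ← div_eq_inv_mul, le_div_iff₀' ha]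
    exact (hf x y).1
  exact (hanti.isUniformEmbedding hlip.uniformContinuous).isEmbedding

end BilipschitzWith

theorem bilipschitzWith_of_norm_sub_sub_le {E : Type*} [SeminormedAddCommGroup E] {f : E → E}
    {ε : ℝ} (hf : ∀ x y, ‖f x - f y - (x - y)‖ ≤ ε * ‖x - y‖) :
    BilipschitzWith (1 - ε) (1 + ε) f := fun x y => by
  have h₁ := norm_sub_norm_le (f x - f y) (x - y)
  have h₂ := norm_sub_norm_le (x - y) (f x - f y)
  rw [norm_sub_rev (x - y)] at h₂
  simp only [dist_eq_norm]
  constructor <;> linarith [hf x y]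

end Bilipschitz

section Tent

variable {X : Type*} [PseudoMetricSpace X] {x x' y : X} {r : ℝ}

noncomputable def tent (y : X) (r : ℝ) (x : X) : ℝ := max (1 - dist x y / r) 0

theorem tent_nonneg : 0 ≤ tent y r x := le_max_right _ _

theorem tent_le_one (hr : 0 < r) : tent y r x ≤ 1 :=
  max_le (sub_le_self _ (by positivity)) zero_le_one

theorem tent_self : tent y r y = 1 := by simp [tent]

theorem tent_eq_zero (hr : 0 < r) (hx : r ≤ dist x y) : tent y r x = 0 :=
  max_eq_right (sub_nonpos.2 ((le_div_iff₀ hr).2 (by linarith)))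

theorem abs_tent_sub_tent_le (hr : 0 < r) : |tent y r x - tent y r x'| ≤ dist x x' / r := by
  refine (abs_max_sub_max_le_abs _ _ _).trans ?_
  rw [sub_sub_sub_cancel_left, ← sub_div, abs_div, abs_of_pos hr]
  gcongr
  simpa [abs_sub_comm] using abs_dist_sub_le x x' y

end Tent

section NormedSpace

variable {E : Type*} [NormedAddCommGroup E] [NormedSpace ℝ E]

theorem exists_homeomorph_coe_eq_of_norm_sub_sub_le [CompleteSpace E] {f : E → E} {c : ℝ}
    (hc : c < 1) (hf : ∀ x y, ‖f x - f y - (x - y)‖ ≤ c * ‖x - y‖) :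
    ∃ φ : E ≃ₜ E, ⇑φ = f := by
  have happrox : ApproximatesLinearOn f
      ((ContinuousLinearEquiv.refl ℝ E : E ≃L[ℝ] E) : E →L[ℝ] E) univ c.toNNReal :=
    fun x _ y _ =>
      (hf x y).trans (mul_le_mul_of_nonneg_right (Real.le_coe_toNNReal c) (norm_nonneg _))
  have hsmall : Subsingleton E ∨
      c.toNNReal < ‖((ContinuousLinearEquiv.refl ℝ E).symm : E →L[ℝ] E)‖₊⁻¹ := by
    rcases subsingleton_or_nontrivial E with h | h
    · exact Or.inl h
    · right
      rw [ContinuousLinearEquiv.refl_symm, ContinuousLinearEquiv.coe_refl,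
        ContinuousLinearMap.nnnorm_id, inv_one]
      exact Real.toNNReal_lt_one.2 hc
  exact ⟨happrox.toHomeomorph f hsmall, rfl⟩

noncomputable def tentPush (y w : E) (r : ℝ) (x : E) : E := x + tent y r x • w

variable {x x' y w : E} {r : ℝ}

theorem tentPush_self : tentPush y w r y = y + w := by simp [tentPush, tent_self]

theorem tentPush_eq_self (hr : 0 < r) (hx : r ≤ dist x y) : tentPush y w r x = x := by
  simp [tentPush, tent_eq_zero hr hx]

theorem norm_tentPush_sub_le (hr : 0 < r) : ‖tentPush y w r x - x‖ ≤ ‖w‖ := by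
  rw [tentPush, add_sub_cancel_left, norm_smul, Real.norm_of_nonneg tent_nonneg]
  exact mul_le_of_le_one_left (norm_nonneg w) (tent_le_one hr)

theorem norm_tentPush_sub_tentPush_sub_le (hr : 0 < r) :
    ‖tentPush y w r x - tentPush y w r x' - (x - x')‖ ≤ ‖w‖ / r * ‖x - x'‖ := by
  have h : tentPush y w r x - tentPush y w r x' - (x - x') = (tent y r x - tent y r x') • w := by
    simp only [tentPush, sub_smul]; abel
  rw [h, norm_smul, Real.norm_eq_abs, div_mul_comm, ← dist_eq_norm x x']
  exact mul_le_mul_of_nonneg_right (abs_tent_sub_tent_le hr) (norm_nonneg w)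

theorem exists_homeomorph_eqOn_symm_apply_notMem [CompleteSpace E] {K U : Set E}
    (hK : IsClosed K) (hU : interior U = ∅) {c : E} (hc : c ∉ K) {ε : ℝ} (hε₀ : 0 < ε)
    (hε₁ : ε < 1) :
    ∃ φ : E ≃ₜ E, EqOn φ id K ∧ φ.symm c ∉ U ∧ (∀ x, dist (φ x) x ≤ ε) ∧
      BilipschitzWith (1 - ε) (1 + ε) φ := by
  obtain ⟨ρ, hρ, hρK⟩ := Metric.isOpen_iff.1 hK.isOpen_compl c hc
  set r := min (ρ / 2) 1
  have hr : 0 < r := by positivity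
  have hr₁ : r ≤ 1 := min_le_right _ _
  obtain ⟨y, hyU, hyc⟩ := (interior_eq_empty_iff_dense_compl.1 hU).exists_mem_open isOpen_ball
    (nonempty_ball.2 (mul_pos hε₀ hr))
  have hyc : dist y c < ε * r := hyc
  have hw : ‖c - y‖ < ε * r := by rwa [dist_comm, dist_eq_norm] at hyc
  have hwr : ‖c - y‖ / r ≤ ε := (div_le_iff₀ hr).2 hw.le
  obtain ⟨φ, hφ⟩ := exists_homeomorph_coe_eq_of_norm_sub_sub_le (f := tentPush y (c - y) r)
    (hwr.trans_lt hε₁) fun x x' => norm_tentPush_sub_tentPush_sub_le hr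
  refine ⟨φ, fun x hx => ?_, ?_, fun x => ?_, ?_⟩
  · rw [hφ]
    refine tentPush_eq_self hr ?_
    have hxc : ρ ≤ dist x c := not_lt.1 fun h => hρK (mem_ball.2 h) hx
    nlinarith [min_le_left (ρ / 2) 1, dist_triangle x y c]
  · have hφy : φ y = c := by rw [hφ, tentPush_self, add_sub_cancel]
    rwa [← hφy, φ.symm_apply_apply]
  · rw [hφ, dist_eq_norm]
    exact (norm_tentPush_sub_le hr).trans (by nlinarith)
  · rw [hφ]
    exact (bilipschitzWith_of_norm_sub_sub_le fun x x' => norm_tentPush_sub_tentPush_sub_le hr).mono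
      (by linarith) (by linarith)

/-- The margins `4⁻¹ ^ k` absorb the factors `1 ± 4⁻¹ ^ (k + 1)` of the next push, so that every
stage, and hence the limit, is bi-Lipschitz with constants `1 / 2` and `2`. -/
structure AvoidanceStage (Ω S : Set E) (t : ℕ → E) (k : ℕ) (G : E ≃ₜ E) : Prop where
  eqOn_compl : EqOn G id Ωᶜ
  symm_notMem : ∀ j < k, G.symm (t j) ∉ S
  bilipschitz : BilipschitzWith ((1 + 4⁻¹ ^ k) / 2) (2 - 4⁻¹ ^ k) G

theorem AvoidanceStage.exists_succ [CompleteSpace E] {Ω S : Set E} {t : ℕ → E} {k : ℕ}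
    {G : E ≃ₜ E} (hΩ : IsOpen Ω) (hS : interior S = ∅) (ht : t k ∈ Ω)
    (hG : AvoidanceStage Ω S t k G) :
    ∃ G' : E ≃ₜ E, AvoidanceStage Ω S t (k + 1) G' ∧
      (∀ x, dist (G' x) (G x) ≤ 4⁻¹ ^ (k + 1)) ∧ ∀ j < k, G'.symm (t j) = G.symm (t j) := by
  have hq : (4⁻¹ : ℝ) ^ (k + 1) = 4⁻¹ ^ k / 4 := by rw [pow_succ]; ring
  have hq₀ : (0 : ℝ) < 4⁻¹ ^ k := by positivity
  have hq₁ : (4⁻¹ : ℝ) ^ k ≤ 1 := pow_le_one₀ (by norm_num) (by norm_num)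
  by_cases hk : G.symm (t k) ∈ S
  swap
  · refine ⟨G, ⟨hG.eqOn_compl, fun j hj => ?_, hG.bilipschitz.mono ?_ ?_⟩, by simp, fun _ _ => rfl⟩
    · rcases Nat.lt_succ_iff_lt_or_eq.1 hj with hj | rfl
      exacts [hG.symm_notMem j hj, hk]
    all_goals linarith
  -- Now `t k` differs from every earlier `t j`, and those must stay fixed.
  have htK : t k ∉ Ωᶜ ∪ t '' Iio k := by
    rintro (h | ⟨j, hj, hjk⟩)
    exacts [h ht, hG.symm_notMem j hj (hjk ▸ hk)]
  obtain ⟨φ, hφK, hφk, hφdist, hφ⟩ := exists_homeomorph_eqOn_symm_apply_notMem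
    (hΩ.isClosed_compl.union ((finite_Iio k).image t).isClosed)
    (by rw [← G.image_interior, hS, image_empty]) htK (ε := 4⁻¹ ^ (k + 1)) (by positivity)
    (pow_lt_one₀ (by norm_num) (by norm_num) k.succ_ne_zero)
  have hφt : ∀ j < k, φ.symm (t j) = t j := fun j hj =>
    φ.symm_apply_eq.2 (hφK (Or.inr ⟨j, hj, rfl⟩)).symm
  refine ⟨G.trans φ, ⟨fun x hx => ?_, fun j hj => ?_, ?_⟩, fun x => hφdist (G x), fun j hj => ?_⟩
  · simp [hG.eqOn_compl hx, hφK (Or.inl hx)]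
  · rw [Homeomorph.symm_trans_apply]
    rcases Nat.lt_succ_iff_lt_or_eq.1 hj with hj | rfl
    · rw [hφt j hj]
      exact hG.symm_notMem j hj
    · exact fun h => hφk ⟨_, h, G.apply_symm_apply _⟩
  · change BilipschitzWith _ _ (φ ∘ G)
    refine (hφ.comp hG.bilipschitz (by linarith) (by linarith)).mono ?_ ?_ <;> nlinarith
  · rw [Homeomorph.symm_trans_apply, hφt j hj]

theorem exists_isEmbedding_eqOn_compl_range_subset_image_compl [CompleteSpace E]
    {Ω S : Set E} (hΩ : IsOpen Ω) (hS : interior S = ∅) {t : ℕ → E} (ht : ∀ k, t k ∈ Ω) :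
    ∃ H : E → E, IsEmbedding H ∧ EqOn H id Ωᶜ ∧ range t ⊆ H '' Sᶜ := by
  have h₀ : AvoidanceStage Ω S t 0 (Homeomorph.refl E) :=
    ⟨fun _ _ => rfl, fun j hj => absurd hj j.not_lt_zero, fun x y => by norm_num⟩
  obtain ⟨G, hG, hGsucc⟩ := exists_seq_of_forall_exists_succ h₀
    fun k G hG => hG.exists_succ hΩ hS (ht k)
  have hcauchy : ∀ x, CauchySeq (G · x) := fun x =>
    cauchySeq_of_le_geometric 4⁻¹ 4⁻¹ (by norm_num) fun k => by
      rw [dist_comm, ← pow_succ']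
      exact (hGsucc k).1 x
  choose H hH using fun x => cauchySeq_tendsto_of_complete (hcauchy x)
  have hstable : ∀ k, ∀ m > k, (G m).symm (t k) = (G (k + 1)).symm (t k) := by
    intro k m hm
    induction m, hm using Nat.le_induction with
    | base => rfl
    | succ m hm ih => rw [(hGsucc m).2 k hm, ih]
  refine ⟨H, ?_, fun x hx => ?_, ?_⟩
  · refine (BilipschitzWith.of_tendsto (fun k => (hG k).bilipschitz.mono ?_ ?_) hH).isEmbedding
      (a := 1 / 2) (b := 2) (by norm_num)
    all_goals have : (0 : ℝ) ≤ 4⁻¹ ^ k := by positivity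
    all_goals linarith
  · refine tendsto_nhds_unique (hH x) ?_
    simp only [(hG _).eqOn_compl hx]
    exact tendsto_const_nhds
  · rintro _ ⟨k, rfl⟩
    refine ⟨(G (k + 1)).symm (t k), (hG (k + 1)).symm_notMem k k.lt_succ_self,
      tendsto_nhds_unique (hH _) (tendsto_const_nhds.congr' ?_)⟩
    filter_upwards [eventually_gt_atTop k] with m hm
    rw [← hstable k m hm, Homeomorph.apply_symm_apply]

end NormedSpace

theorem stmt2_general (n : ℕ)
    (A : Type*) [TopologicalSpace A]
    (f : A → EuclideanSpace ℝ (Fin n))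
    (hf : Topology.IsEmbedding f)
    (hfD : Set.range f ⊆ Metric.closedBall (0 : EuclideanSpace ℝ (Fin n)) 1)
    (hint : interior (Set.range f) = ∅)
    (T : Set (EuclideanSpace ℝ (Fin n)))
    (hT : T.Countable) (hTball : T ⊆ Metric.ball (0 : EuclideanSpace ℝ (Fin n)) 1) :
    ∃ g : A → EuclideanSpace ℝ (Fin n),
      Topology.IsEmbedding g ∧
      Set.range g ⊆ Metric.closedBall (0 : EuclideanSpace ℝ (Fin n)) 1 \ T ∧
      f ⁻¹' Metric.sphere (0 : EuclideanSpace ℝ (Fin n)) 1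
        = g ⁻¹' Metric.sphere (0 : EuclideanSpace ℝ (Fin n)) 1 ∧
      ∀ a : A, f a ∈ Metric.sphere (0 : EuclideanSpace ℝ (Fin n)) 1 → g a = f a := by
  -- `0` is added so that the enumeration also exists when `T` is empty.
  obtain ⟨t, ht⟩ := (hT.insert 0).exists_eq_range (insert_nonempty 0 T)
  obtain ⟨H, hH, hHfix, hHt⟩ := exists_isEmbedding_eqOn_compl_range_subset_image_compl
    isOpen_ball hint fun k => insert_subset (mem_ball_self one_pos) hTball (ht ▸ mem_range_self k)
  have hball : MapsTo H (ball 0 1) (ball 0 1) :=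
    mapsTo_of_injective_of_eqOn_compl hH.injective hHfix
  have hsphere : ∀ x ∈ sphere (0 : EuclideanSpace ℝ (Fin n)) 1, H x = x := fun x hx =>
    hHfix (sphere_disjoint_ball.notMem_of_mem_left hx)
  have hfD' : ∀ a, f a ∈ ball 0 1 ∨ f a ∈ sphere 0 1 := fun a => by
    simpa only [← ball_union_sphere, mem_union] using hfD (mem_range_self a)
  refine ⟨H ∘ f, hH.comp hf, ?_, ?_, fun a ha => hsphere _ ha⟩
  · rintro _ ⟨a, rfl⟩
    refine ⟨?_, fun haT => ?_⟩
    · rcases hfD' a with h | h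
      · exact ball_subset_closedBall (hball h)
      · rw [Function.comp_apply, hsphere _ h]
        exact sphere_subset_closedBall h
    · obtain ⟨p, hp, hpa⟩ := hHt (ht ▸ subset_insert 0 T haT)
      exact hp (hH.injective hpa ▸ mem_range_self a)
  · ext a
    rcases hfD' a with h | h
    · simp only [mem_preimage, Function.comp_apply]
      exact iff_of_false (sphere_disjoint_ball.notMem_of_mem_right h)
        (sphere_disjoint_ball.notMem_of_mem_right (hball h))
    · simp [hsphere _ h]

theorem stmt2 (n : ℕ) (hn : 1 ≤ n)
    (A : Type*) [TopologicalSpace A]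
    (f : A → EuclideanSpace ℝ (Fin n))
    (hf : Topology.IsEmbedding f)
    (hfD : Set.range f ⊆ Metric.closedBall (0 : EuclideanSpace ℝ (Fin n)) 1)
    (hint : interior (Set.range f) = ∅)
    (T : Set (EuclideanSpace ℝ (Fin n)))
    (hT : T.Countable) (hTball : T ⊆ Metric.ball (0 : EuclideanSpace ℝ (Fin n)) 1) :
    ∃ g : A → EuclideanSpace ℝ (Fin n),
      Topology.IsEmbedding g ∧
      Set.range g ⊆ Metric.closedBall (0 : EuclideanSpace ℝ (Fin n)) 1 \ T ∧
      f ⁻¹' Metric.sphere (0 : EuclideanSpace ℝ (Fin n)) 1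
        = g ⁻¹' Metric.sphere (0 : EuclideanSpace ℝ (Fin n)) 1 ∧
      ∀ a : A, f a ∈ Metric.sphere (0 : EuclideanSpace ℝ (Fin n)) 1 → g a = f a :=
  stmt2_general n A f hf hfD hint T hT hTball
end

section
/- Let T ⊆ ℝ² be a countable set with T ∩ {p₁, p₂, p₃, p₄} = ∅. Then there exists t ∈ [−1/8, 1/8] such that G_t ∩ T = ∅. -/
open Metric Set

/-- The point `(x, y)` of the Euclidean plane. -/
noncomputable def pt2 (x y : ℝ) : EuclideanSpace ℝ (Fin 2) :=
  (WithLp.equiv 2 (Fin 2 → ℝ)).symm ![x, y]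

/-- The closed unit disc with three open discs of radius `1/4` removed. -/
noncomputable def Qregion : Set (EuclideanSpace ℝ (Fin 2)) :=
  Metric.closedBall (pt2 0 0) 1 \
    (Metric.ball (pt2 (-(1/2)) 0) (1/4) ∪ Metric.ball (pt2 0 (1/2)) (1/4) ∪
      Metric.ball (pt2 0 (-(1/2))) (1/4))

noncomputable def p1 : EuclideanSpace ℝ (Fin 2) := pt2 (-(1/4)) 0
noncomputable def p2 : EuclideanSpace ℝ (Fin 2) := pt2 0 (1/4)
noncomputable def p3 : EuclideanSpace ℝ (Fin 2) := pt2 0 (-(1/4))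
noncomputable def p4 : EuclideanSpace ℝ (Fin 2) := pt2 1 0

/-- The union of the four closed segments from `(t, -t)` to `p₁, p₂, p₃, p₄`. -/
noncomputable def Gt (t : ℝ) : Set (EuclideanSpace ℝ (Fin 2)) :=
  segment ℝ (pt2 t (-t)) p1 ∪ segment ℝ (pt2 t (-t)) p2 ∪
    segment ℝ (pt2 t (-t)) p3 ∪ segment ℝ (pt2 t (-t)) p4


/-! A point `x` of `Gₜ` other than the `pᵢ` lies on a segment from `(t, -t)` to some `pᵢ`. The
functional `x ↦ x₀ + x₁` vanishes on the line `y = -x` but not at `pᵢ`, so its value at `x` fixes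
the barycentric weight of `pᵢ` in `x`, hence the other endpoint `(t, -t)`. Thus every `x` meets
`Gₜ` for at most four values of `t`; a countable `T` therefore excludes only countably many `t`,
while `[-1/8, 1/8]` is uncountable. -/

theorem segment_endpoint_unique_of_mem_ker {𝕜 E : Type*} [Field 𝕜] [PartialOrder 𝕜]
    [AddCommGroup E] [Module 𝕜 E] (φ : E →ₗ[𝕜] 𝕜) {q x u v : E} (hu : φ u = 0) (hv : φ v = 0)
    (hq : φ q ≠ 0) (hxq : x ≠ q) (hxu : x ∈ segment 𝕜 u q) (hxv : x ∈ segment 𝕜 v q) :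
    u = v := by
  obtain ⟨a, b, -, -, hab, rfl⟩ := hxu
  obtain ⟨a', b', -, -, hab', hx⟩ := hxv
  have hb : b' = b := by
    have := congrArg φ hx
    simp only [map_add, map_smul, hu, hv, smul_eq_mul, mul_zero, zero_add] at this
    exact mul_right_cancel₀ hq this
  have ha : a' = a := by linear_combination hab' - hab - hb
  rw [ha, hb] at hx
  have ha0 : a ≠ 0 := by
    rintro rfl
    rw [zero_add] at hab
    simp [hab] at hxq
  exact (smul_right_inj ha0).mp (add_right_cancel hx).symm

noncomputable def coordSum : EuclideanSpace ℝ (Fin 2) →ₗ[ℝ] ℝ :=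
  (EuclideanSpace.proj 0 + EuclideanSpace.proj 1 : EuclideanSpace ℝ (Fin 2) →L[ℝ] ℝ)

@[simp]
theorem coordSum_pt2 (x y : ℝ) : coordSum (pt2 x y) = x + y := by
  simp [coordSum, pt2]

theorem subsingleton_setOf_mem_segment_antidiagonal {q : EuclideanSpace ℝ (Fin 2)}
    (hq : coordSum q ≠ 0) {x : EuclideanSpace ℝ (Fin 2)} (hxq : x ≠ q) :
    {t : ℝ | x ∈ segment ℝ (pt2 t (-t)) q}.Subsingleton := by
  intro s hs t ht
  have h := segment_endpoint_unique_of_mem_ker coordSum (by simp) (by simp) hq hxq hs ht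
  simpa [pt2] using congrArg (· 0) h

theorem finite_setOf_mem_Gt {x : EuclideanSpace ℝ (Fin 2)}
    (hx : x ∉ ({p1, p2, p3, p4} : Set (EuclideanSpace ℝ (Fin 2)))) :
    {t : ℝ | x ∈ Gt t}.Finite := by
  simp only [mem_insert_iff, mem_singleton_iff, not_or] at hx
  obtain ⟨h1, h2, h3, h4⟩ := hx
  have hfin {q} (hq : coordSum q ≠ 0) (hxq : x ≠ q) :=
    (subsingleton_setOf_mem_segment_antidiagonal hq hxq).finite
  simp only [Gt, mem_union, ofPred_or]
  refine ((((hfin ?_ h1).union (hfin ?_ h2)).union (hfin ?_ h3)).union (hfin ?_ h4)) <;>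
    norm_num [p1, p2, p3, p4]

theorem exists_inter_eq_empty_of_countable {ι α : Type*} {S : Set ι} (hS : ¬S.Countable)
    {T : Set α} (hT : T.Countable) (G : ι → Set α) (hG : ∀ x ∈ T, {t | x ∈ G t}.Countable) :
    ∃ t ∈ S, G t ∩ T = ∅ := by
  obtain ⟨t, htS, ht⟩ := not_subset.mp fun hsub => hS ((hT.biUnion hG).mono hsub)
  refine ⟨t, htS, eq_empty_of_forall_notMem fun x ⟨hxG, hxT⟩ => ht ?_⟩
  exact mem_biUnion hxT hxG

theorem stmt6 (T : Set (EuclideanSpace ℝ (Fin 2)))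
    (hT : T.Countable) (hTp : T ∩ {p1, p2, p3, p4} = ∅) :
    ∃ t ∈ Set.Icc (-(1/8) : ℝ) (1/8), Gt t ∩ T = ∅ := by
  refine exists_inter_eq_empty_of_countable (by norm_num) hT Gt fun x hx => ?_
  exact (finite_setOf_mem_Gt fun hp => (eq_empty_iff_forall_notMem.mp hTp) x ⟨hx, hp⟩).countable
end

section
/- Let T be a countable subset of the interior of Q in ℝ². Then there exists a topological embedding h : E₄ → ℝ² with range contained in Q such that h(1,0) = p₄, h(−1,0) = p₁, h(0,1) = p₂, h(0,−1) = p₃, the range of h is disjoint from T, and the range of h intersects the frontier of Q precisely in the set {p₁, p₂, p₃, p₄}. -/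
open Metric Set

/-- The standard 4-pointed star `E₄ ⊆ ℝ²`: the union of the four closed segments from
the origin to the points `(1,0)`, `(-1,0)`, `(0,1)`, `(0,-1)`. -/
noncomputable def E4 : Set (EuclideanSpace ℝ (Fin 2)) :=
  segment ℝ (pt2 0 0) (pt2 1 0) ∪ segment ℝ (pt2 0 0) (pt2 (-1) 0) ∪
    segment ℝ (pt2 0 0) (pt2 0 1) ∪ segment ℝ (pt2 0 0) (pt2 0 (-1))

/-! For `0 < t < 1/4` let `h` map `E₄` piecewise affinely onto the star with centre
`c = (t, -t)` and tips `p₁, …, p₄`. The four arms `pᵢ - c` point in pairwise different directions,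
so `h` is injective on `E₄`, hence an embedding since `E₄` is compact. The star lies in the convex
set `K = {‖z‖ ≤ 1, x ≥ -1/4, |y| ≤ 1/4} ⊆ Q`, and `c` is an interior point of `K`, so every point
of the star other than the tips is interior to `Q`, while the tips lie on the frontier of `Q`.
Finally no `pᵢ` lies on the line `x + y = 0` that carries the centres, so a point `x ≠ pᵢ` lies
on `[c, pᵢ]` for at most one `t`; as `T` is countable, all but countably many `t` give a star
disjoint from `T`. -/

@[simp] lemma pt2_apply_zero (a b : ℝ) : pt2 a b 0 = a := rfl
@[simp] lemma pt2_apply_one (a b : ℝ) : pt2 a b 1 = b := rfl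

lemma pt2_zero_zero : pt2 0 0 = 0 := by
  ext i; fin_cases i <;> rfl

lemma pt2_sub_pt2 (a b c d : ℝ) : pt2 a b - pt2 c d = pt2 (a - c) (b - d) := by
  ext i; fin_cases i <;> rfl

lemma smul_pt2 (r a b : ℝ) : r • pt2 a b = pt2 (r * a) (r * b) := by
  ext i; fin_cases i <;> rfl

lemma pt2_inj {a b c d : ℝ} : pt2 a b = pt2 c d ↔ a = c ∧ b = d :=
  ⟨fun h => ⟨congrArg (· 0) h, congrArg (· 1) h⟩, fun ⟨h₁, h₂⟩ => h₁ ▸ h₂ ▸ rfl⟩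

lemma dist_pt2 (a b c d : ℝ) : dist (pt2 a b) (pt2 c d) = √((a - c) ^ 2 + (b - d) ^ 2) := by
  simp [EuclideanSpace.dist_eq, Fin.sum_univ_two, Real.dist_eq, sq_abs]

lemma eq_zero_of_smul_eq_smul_of_not_sameRay {M : Type*} [AddCommGroup M] [Module ℝ M]
    {u v : M} (h : ¬SameRay ℝ u v) {s s' : ℝ} (hs : 0 ≤ s) (hs' : 0 ≤ s')
    (he : s • u = s' • v) : s = 0 ∧ s' = 0 := by
  have hu : u ≠ 0 := fun hu => h (hu ▸ SameRay.zero_left v)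
  have hv : v ≠ 0 := fun hv => h (hv ▸ SameRay.zero_right u)
  rcases hs.eq_or_lt with rfl | hs
  · simpa [hv, eq_comm] using he
  rcases hs'.eq_or_lt with rfl | hs'
  · simp [hs.ne', hu] at he
  exact absurd (Or.inr (Or.inr ⟨s, s', hs, hs', he⟩)) h

section StarMap

noncomputable def e4Tip : Fin 4 → EuclideanSpace ℝ (Fin 2) :=
  ![pt2 (-1) 0, pt2 0 1, pt2 0 (-1), pt2 1 0]

lemma e4Tip_mem_E4 (i : Fin 4) : e4Tip i ∈ E4 := by
  fin_cases i
  · exact Or.inl (Or.inl (Or.inr (right_mem_segment ..)))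
  · exact Or.inl (Or.inr (right_mem_segment ..))
  · exact Or.inr (right_mem_segment ..)
  · exact Or.inl (Or.inl (Or.inl (right_mem_segment ..)))

lemma exists_mem_segment_e4Tip_of_mem_E4 {z : EuclideanSpace ℝ (Fin 2)} (hz : z ∈ E4) :
    ∃ i, z ∈ segment ℝ 0 (e4Tip i) := by
  rw [E4, pt2_zero_zero] at hz
  rcases hz with ((hz | hz) | hz) | hz
  exacts [⟨3, hz⟩, ⟨0, hz⟩, ⟨1, hz⟩, ⟨2, hz⟩]

lemma isCompact_E4 : IsCompact E4 := by
  have (x y : EuclideanSpace ℝ (Fin 2)) : IsCompact (segment ℝ x y) := by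
    rw [segment_eq_image]; exact isCompact_Icc.image (by fun_prop)
  exact (((this _ _).union (this _ _)).union (this _ _)).union (this _ _)

variable {E : Type*} [NormedAddCommGroup E] [NormedSpace ℝ E]

-- On the arm `[0, e4Tip i]` of `E4` only the `i`-th coefficient is nonzero, so `starMap c q`
-- maps that arm affinely onto `[c, q i]`.
noncomputable def starMap (c : E) (q : Fin 4 → E) (z : EuclideanSpace ℝ (Fin 2)) : E :=
  c + max (-z 0) 0 • (q 0 - c) + max (z 1) 0 • (q 1 - c) + max (-z 1) 0 • (q 2 - c)
    + max (z 0) 0 • (q 3 - c)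

lemma continuous_starMap (c : E) (q : Fin 4 → E) : Continuous (starMap c q) := by
  unfold starMap; fun_prop

lemma starMap_smul_e4Tip (c : E) (q : Fin 4 → E) (i : Fin 4) {s : ℝ} (hs : 0 ≤ s) :
    starMap c q (s • e4Tip i) = c + s • (q i - c) := by
  fin_cases i <;> simp [starMap, e4Tip, smul_pt2, hs]

lemma starMap_e4Tip (c : E) (q : Fin 4 → E) (i : Fin 4) : starMap c q (e4Tip i) = q i := by
  simpa using starMap_smul_e4Tip c q i zero_le_one

lemma starMap_image_E4_subset (c : E) (q : Fin 4 → E) :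
    starMap c q '' E4 ⊆ ⋃ i, segment ℝ c (q i) := by
  rintro _ ⟨z, hz, rfl⟩
  obtain ⟨i, hi⟩ := exists_mem_segment_e4Tip_of_mem_E4 hz
  rw [segment_eq_image'] at hi
  obtain ⟨s, hs, rfl⟩ := hi
  refine mem_iUnion.2 ⟨i, ?_⟩
  simp only [zero_add, sub_zero, starMap_smul_e4Tip c q i hs.1, segment_eq_image']
  exact mem_image_of_mem _ hs

lemma injOn_starMap {c : E} {q : Fin 4 → E}
    (hq : Pairwise fun i j => ¬SameRay ℝ (q i - c) (q j - c)) : InjOn (starMap c q) E4 := by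
  have hq0 (i : Fin 4) : q i - c ≠ 0 := fun h0 =>
    hq (show i ≠ i + 1 by fin_cases i <;> decide) (h0 ▸ SameRay.zero_left _)
  intro z hz w hw hzw
  obtain ⟨i, hi⟩ := exists_mem_segment_e4Tip_of_mem_E4 hz
  obtain ⟨j, hj⟩ := exists_mem_segment_e4Tip_of_mem_E4 hw
  rw [segment_eq_image'] at hi hj
  obtain ⟨s, hs, rfl⟩ := hi
  obtain ⟨s', hs', rfl⟩ := hj
  simp only [zero_add, sub_zero, starMap_smul_e4Tip c q _ hs.1, starMap_smul_e4Tip c q _ hs'.1,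
    add_right_inj] at hzw ⊢
  rcases eq_or_ne i j with rfl | hij
  · rw [smul_left_injective ℝ (hq0 i) hzw]
  · obtain ⟨rfl, rfl⟩ := eq_zero_of_smul_eq_smul_of_not_sameRay (hq hij) hs.1 hs'.1 hzw
    simp

lemma isEmbedding_domRestrict_starMap {c : E} {q : Fin 4 → E}
    (hq : Pairwise fun i j => ¬SameRay ℝ (q i - c) (q j - c)) :
    Topology.IsEmbedding (E4.domRestrict (starMap c q)) :=
  have : CompactSpace E4 := isCompact_iff_compactSpace.mp isCompact_E4
  ((continuous_starMap c q).comp continuous_subtype_val).isClosedEmbedding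
    (injOn_iff_injective.mp (injOn_starMap hq)) |>.isEmbedding

end StarMap

noncomputable def pTip : Fin 4 → EuclideanSpace ℝ (Fin 2) := ![p1, p2, p3, p4]

lemma range_pTip : range pTip = {p1, p2, p3, p4} := by
  simp only [pTip, Matrix.range_cons, Matrix.range_empty, union_empty, singleton_union]

lemma pTip_apply_zero_add_apply_one_ne_zero (i : Fin 4) : pTip i 0 + pTip i 1 ≠ 0 := by
  fin_cases i <;> norm_num [pTip, p1, p2, p3, p4]

noncomputable def starCenter (t : ℝ) : EuclideanSpace ℝ (Fin 2) := pt2 t (-t)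

lemma not_sameRay_pt2 {a b c d : ℝ} (h : a * d ≠ b * c ∨ a * c + b * d < 0) :
    ¬SameRay ℝ (pt2 a b) (pt2 c d) := by
  rintro (h0 | h0 | ⟨r₁, r₂, hr₁, hr₂, he⟩)
  · obtain ⟨rfl, rfl⟩ := pt2_inj.1 (h0.trans pt2_zero_zero.symm)
    simp at h
  · obtain ⟨rfl, rfl⟩ := pt2_inj.1 (h0.trans pt2_zero_zero.symm)
    simp at h
  · rw [smul_pt2, smul_pt2, pt2_inj] at he
    obtain ⟨h₁, h₂⟩ := he
    refine h.elim (fun h => h ?_) fun h => ?_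
    · apply mul_left_cancel₀ hr₁.ne'
      linear_combination d * h₁ - c * h₂
    · have : r₁ * (a * c + b * d) = r₂ * (c ^ 2 + d ^ 2) := by
        linear_combination c * h₁ + d * h₂
      have hcd : 0 ≤ r₂ * (c ^ 2 + d ^ 2) := by positivity
      linarith [mul_neg_of_pos_of_neg hr₁ h]

lemma pairwise_not_sameRay_pTip_sub_starCenter {t : ℝ} (ht : t ∈ Ioo 0 (1/4)) :
    Pairwise fun i j => ¬SameRay ℝ (pTip i - starCenter t) (pTip j - starCenter t) := by
  obtain ⟨ht₀, ht₁⟩ := ht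
  intro i j hij
  fin_cases i <;> fin_cases j <;> simp only [ne_eq, not_true_eq_false] at hij <;>
    simp only [pTip, starCenter, p1, p2, p3, p4, Fin.reduceFinMk, Matrix.cons_val,
      pt2_sub_pt2] <;>
    apply not_sameRay_pt2 <;>
    first
      | exact Or.inl (ne_of_gt (by nlinarith))
      | exact Or.inl (ne_of_lt (by nlinarith))
      | exact Or.inr (by nlinarith)

noncomputable def Kregion : Set (EuclideanSpace ℝ (Fin 2)) :=
  closedBall (pt2 0 0) 1 ∩ {z | -(1/4) ≤ z 0} ∩ {z | -(1/4) ≤ z 1} ∩ {z | z 1 ≤ 1/4}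

lemma convex_Kregion : Convex ℝ Kregion := by
  have hlin (i : Fin 2) : IsLinearMap ℝ fun z : EuclideanSpace ℝ (Fin 2) => z i :=
    ⟨fun _ _ => rfl, fun _ _ => rfl⟩
  exact (((convex_closedBall _ _).inter (convex_halfSpace_ge (hlin 0) _)).inter
    (convex_halfSpace_ge (hlin 1) _)).inter (convex_halfSpace_le (hlin 1) _)

lemma Kregion_subset_Qregion : Kregion ⊆ Qregion := by
  rintro z ⟨⟨⟨hz, (h₀ : -(1/4) ≤ z 0)⟩, (h₁ : -(1/4) ≤ z 1)⟩, (h₂ : z 1 ≤ 1/4)⟩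
  have hcoord (w : EuclideanSpace ℝ (Fin 2)) (i : Fin 2) (h : 1/4 ≤ |z i - w i|) :
      z ∉ ball w (1/4) :=
    fun hw => (h.trans (PiLp.dist_apply_le z w i)).not_gt hw
  refine ⟨hz, ?_⟩
  rintro ((h | h) | h)
  · exact hcoord _ 0 (by rw [pt2_apply_zero, abs_of_nonneg (by linarith)]; linarith) h
  · exact hcoord _ 1 (by rw [pt2_apply_one, abs_of_nonpos (by linarith)]; linarith) h
  · exact hcoord _ 1 (by rw [pt2_apply_one, abs_of_nonneg (by linarith)]; linarith) h

lemma starCenter_mem_interior_Kregion {t : ℝ} (ht : |t| < 1/4) :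
    starCenter t ∈ interior Kregion := by
  obtain ⟨ht₀, ht₁⟩ := abs_lt.1 ht
  refine interior_maximal (t := ball (pt2 0 0) 1 ∩ {z | -(1/4) < z 0} ∩ {z | -(1/4) < z 1} ∩
    {z | z 1 < 1/4}) ?_ ?_ ?_
  · have hle {f g : EuclideanSpace ℝ (Fin 2) → ℝ} : {z | f z < g z} ⊆ {z | f z ≤ g z} :=
      ofPred_subset_ofPred.2 fun _ => le_of_lt
    exact inter_subset_inter (inter_subset_inter (inter_subset_inter ball_subset_closedBall hle)
      hle) hle
  · exact ((isOpen_ball.inter (isOpen_lt continuous_const (by fun_prop))).inter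
      (isOpen_lt continuous_const (by fun_prop))).inter (isOpen_lt (by fun_prop) continuous_const)
  · refine ⟨⟨⟨?_, ?_⟩, ?_⟩, ?_⟩
    · rw [mem_ball, starCenter, dist_pt2, Real.sqrt_lt' one_pos]
      nlinarith
    all_goals simp only [starCenter, mem_ofPred_eq, pt2_apply_zero, pt2_apply_one]; linarith

lemma pTip_mem_Kregion (i : Fin 4) : pTip i ∈ Kregion := by
  fin_cases i <;> simp [Kregion, pTip, p1, p2, p3, p4, dist_pt2] <;> norm_num

lemma segment_starCenter_subset_Qregion {t : ℝ} (ht : |t| < 1/4) {p : EuclideanSpace ℝ (Fin 2)}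
    (hp : p ∈ Kregion) : segment ℝ (starCenter t) p ⊆ Qregion :=
  (convex_Kregion.segment_subset (interior_subset (starCenter_mem_interior_Kregion ht)) hp).trans
    Kregion_subset_Qregion

lemma segment_starCenter_diff_subset_interior_Qregion {t : ℝ} (ht : |t| < 1/4)
    {p : EuclideanSpace ℝ (Fin 2)} (hp : p ∈ Kregion) :
    segment ℝ (starCenter t) p \ {p} ⊆ interior Qregion := by
  have hc := starCenter_mem_interior_Kregion ht
  refine fun x ⟨hx, hxp⟩ => interior_mono Kregion_subset_Qregion ?_
  rw [← insert_endpoints_openSegment] at hx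
  rcases hx with rfl | rfl | hx
  · exact hc
  · exact absurd rfl hxp
  · exact convex_Kregion.openSegment_interior_self_subset_interior hc hp hx

lemma pTip_mem_frontier_Qregion (i : Fin 4) : pTip i ∈ frontier Qregion := by
  refine ⟨subset_closure (Kregion_subset_Qregion (pTip_mem_Kregion i)), ?_⟩
  rw [← mem_compl_iff, ← closure_compl]
  have hball {c : EuclideanSpace ℝ (Fin 2)} (hc : ball c (1/4) ⊆ Qregionᶜ)
      (hi : dist (pTip i) c ≤ 1/4) :
      pTip i ∈ closure Qregionᶜ :=
    closure_mono hc (by rw [closure_ball _ (by norm_num)]; exact hi)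
  fin_cases i
  · exact hball (fun x hx hxQ => hxQ.2 (Or.inl (Or.inl hx))) (by norm_num [pTip, p1, dist_pt2])
  · exact hball (fun x hx hxQ => hxQ.2 (Or.inl (Or.inr hx))) (by norm_num [pTip, p2, dist_pt2])
  · exact hball (fun x hx hxQ => hxQ.2 (Or.inr hx)) (by norm_num [pTip, p3, dist_pt2])
  · refine closure_mono (compl_subset_compl.2 fun x hx => hx.1) ?_
    rw [closure_compl, interior_closedBall _ one_ne_zero]
    norm_num [pTip, p4, dist_pt2]

lemma subsingleton_setOf_mem_segment_starCenter {p x : EuclideanSpace ℝ (Fin 2)}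
    (hp : p 0 + p 1 ≠ 0) (hx : x ≠ p) : {t | x ∈ segment ℝ (starCenter t) p}.Subsingleton := by
  intro t₁ h₁ t₂ h₂
  rw [mem_ofPred_eq, segment_eq_image] at h₁ h₂
  obtain ⟨s, -, rfl⟩ := h₁
  obtain ⟨s', -, he⟩ := h₂
  have he₀ := congrArg (· 0) he
  have he₁ := congrArg (· 1) he
  simp only [starCenter, PiLp.add_apply, PiLp.smul_apply, pt2_apply_zero, pt2_apply_one,
    smul_eq_mul] at he₀ he₁
  obtain rfl : s' = s := mul_right_cancel₀ hp (by linear_combination he₀ + he₁)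
  have hs : 1 - s' ≠ 0 := fun hs => hx (by simp [show s' = 1 by linarith])
  exact mul_left_cancel₀ hs (by linear_combination -he₀)

lemma exists_mem_Ioo_forall_notMem_segment_starCenter {T P : Set (EuclideanSpace ℝ (Fin 2))}
    (hT : T.Countable) (hP : P.Countable) (hP₀ : ∀ p ∈ P, p 0 + p 1 ≠ 0) (hTP : Disjoint T P)
    {a b : ℝ} (hab : a < b) : ∃ t ∈ Ioo a b, ∀ p ∈ P, ∀ x ∈ T, x ∉ segment ℝ (starCenter t) p := by
  have hB : (⋃ p ∈ P, ⋃ x ∈ T, {t | x ∈ segment ℝ (starCenter t) p}).Countable :=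
    hP.biUnion fun p hp => hT.biUnion fun x hx =>
      (subsingleton_setOf_mem_segment_starCenter (hP₀ p hp) (hTP.ne_of_mem hx hp)).countable
  obtain ⟨t, ht, htB⟩ :=
    (hB.dense_compl ℝ).inter_open_nonempty _ isOpen_Ioo (nonempty_Ioo.2 hab)
  exact ⟨t, ht, fun p hp x hx hxt => htB (mem_biUnion hp (mem_biUnion hx hxt))⟩

theorem stmt7 (T : Set (EuclideanSpace ℝ (Fin 2)))
    (hT : T.Countable) (hTQ : T ⊆ interior Qregion) :
    ∃ h : EuclideanSpace ℝ (Fin 2) → EuclideanSpace ℝ (Fin 2),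
      Topology.IsEmbedding (E4.restrict h) ∧
      h '' E4 ⊆ Qregion ∧
      h (pt2 1 0) = p4 ∧ h (pt2 (-1) 0) = p1 ∧
      h (pt2 0 1) = p2 ∧ h (pt2 0 (-1)) = p3 ∧
      h '' E4 ∩ T = ∅ ∧
      h '' E4 ∩ frontier Qregion = {p1, p2, p3, p4} := by
  have hTpTip : Disjoint T (range pTip) :=
    disjoint_left.2 fun x hxT ⟨i, hi⟩ => (pTip_mem_frontier_Qregion i).2 (hi ▸ hTQ hxT)
  obtain ⟨t, ht, havoid⟩ := exists_mem_Ioo_forall_notMem_segment_starCenter hT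
    (countable_range pTip) (forall_mem_range.2 pTip_apply_zero_add_apply_one_ne_zero) hTpTip
    (by norm_num : (0:ℝ) < 1/4)
  have ht' : |t| < 1/4 := abs_lt.2 ⟨by linarith [ht.1], ht.2⟩
  have himage := starMap_image_E4_subset (starCenter t) pTip
  refine ⟨starMap (starCenter t) pTip,
    isEmbedding_domRestrict_starMap (pairwise_not_sameRay_pTip_sub_starCenter ht),
    himage.trans <| iUnion_subset fun i =>
      segment_starCenter_subset_Qregion ht' (pTip_mem_Kregion i),
    starMap_e4Tip _ _ 3, starMap_e4Tip _ _ 0, starMap_e4Tip _ _ 1, starMap_e4Tip _ _ 2,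
    eq_empty_of_forall_notMem fun x ⟨hx, hxT⟩ => ?_, (range_pTip ▸ Subset.antisymm ?_ ?_)⟩
  · obtain ⟨i, hi⟩ := mem_iUnion.1 (himage hx)
    exact havoid _ (mem_range_self i) x hxT hi
  · rintro x ⟨hx, hxF⟩
    obtain ⟨i, hi⟩ := mem_iUnion.1 (himage hx)
    by_contra hx'
    exact hxF.2 (segment_starCenter_diff_subset_interior_Qregion ht' (pTip_mem_Kregion i)
      ⟨hi, fun h => hx' ⟨i, h.symm⟩⟩)
  · rintro _ ⟨i, rfl⟩
    exact ⟨⟨e4Tip i, e4Tip_mem_E4 i, starMap_e4Tip _ _ i⟩, pTip_mem_frontier_Qregion i⟩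
end
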